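/- Let X₀, X₁, X₂ be random variables on a probability space taking values in the same nonempty finite type, such that (i) X₀ and X₂ are conditionally independent given X₁ (the Markov property), and (ii) the joint distribution of (X₀, X₁) equals the joint distribution of (X₁, X₂) (row stationarity). Then H(X₁) + H(X₁ | X₀, X₂) = 2·H(X₁ | X₀) + I(X₂ ; X₀). -/

import Mathlib

open scoped BigOperators
open MeasureTheory

/-- `pr μ X x = P(X = x)` for a random variable `X` on `(Ω, μ)`. -/
noncomputable def pr {Ω α : Type*} [MeasurableSpace Ω] (μ : Measure Ω)
    (X : Ω → α) (x : α) : ℝ :=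
  (μ (X ⁻¹' {x})).toReal

/-- Shannon entropy `H(X) = −Σ_x P(X = x) log P(X = x)` of a finite-valued random variable. -/
noncomputable def entropy {Ω α : Type*} [MeasurableSpace Ω] [Fintype α]
    (μ : Measure Ω) (X : Ω → α) : ℝ :=
  ∑ x, Real.negMulLog (pr μ X x)

/-- Conditional Shannon entropy `H(X | Y) = H(X, Y) − H(Y)`. -/
noncomputable def condEntropy {Ω α β : Type*} [MeasurableSpace Ω] [Fintype α] [Fintype β]
    (μ : Measure Ω) (X : Ω → α) (Y : Ω → β) : ℝ :=
  entropy μ (fun ω => (X ω, Y ω)) - entropy μ Y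

/-- Mutual information `I(X ; Y) = H(X) − H(X | Y)`. -/
noncomputable def mutualInfo {Ω α β : Type*} [MeasurableSpace Ω] [Fintype α] [Fintype β]
    (μ : Measure Ω) (X : Ω → α) (Y : Ω → β) : ℝ :=
  entropy μ X - condEntropy μ X Y

/-- Conditional mutual information `I(X ; Z | Y) = H(X | Y) + H(Z | Y) − H(X, Z | Y)`. -/
noncomputable def condMutualInfo {Ω α β γ : Type*} [MeasurableSpace Ω]
    [Fintype α] [Fintype β] [Fintype γ]
    (μ : Measure Ω) (X : Ω → α) (Z : Ω → β) (Y : Ω → γ) : ℝ :=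
  condEntropy μ X Y + condEntropy μ Z Y - condEntropy μ (fun ω => (X ω, Z ω)) Y

/-- Kullback–Leibler divergence between two pmfs on a finite type,
with the convention `0 * log (0 / v x) = 0` (automatic since `0 * r = 0` in `ℝ`). -/
noncomputable def klDiv {α : Type*} [Fintype α] (u v : α → ℝ) : ℝ :=
  ∑ x, u x * Real.log (u x / v x)

/-!
Taking logarithms in the Markov factorisation
`P(X₀,X₁,X₂)·P(X₁) = P(X₀,X₁)·P(X₁,X₂)` on the support of the triple and averaging against
its law gives the chain rule `H(X₀,X₁,X₂) + H(X₁) = H(X₀,X₁) + H(X₁,X₂)`. Row stationarity gives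
`H(X₀,X₁) = H(X₁,X₂)` and, since `X₀`, `X₁`, `X₂` are marginals of the one pair law,
`H(X₀) = H(X₁) = H(X₂)`. Expanded into joint entropies, both sides are then
`2·H(X₀,X₁) − H(X₀,X₂)`.
-/

section Pr

variable {Ω α β : Type*} [MeasurableSpace Ω] (μ : Measure Ω)

lemma pr_nonneg (X : Ω → α) (x : α) : 0 ≤ pr μ X x := ENNReal.toReal_nonneg

lemma pr_le_pr_comp [IsFiniteMeasure μ] (X : Ω → α) (f : α → β) (x : α) :
    pr μ X x ≤ pr μ (f ∘ X) (f x) :=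
  ENNReal.toReal_mono (measure_ne_top _ _)
    (measure_mono fun _ (hω : _ = x) => congrArg f hω)

lemma pr_comp_eq_sum [IsFiniteMeasure μ] [Fintype α] [DecidableEq β]
    [MeasurableSpace α] [MeasurableSingletonClass α] {X : Ω → α} (hX : Measurable X)
    (f : α → β) (y : β) :
    pr μ (f ∘ X) y = ∑ x with f x = y, pr μ X x := by
  have hfiber : (f ∘ X) ⁻¹' {y} = X ⁻¹' ↑({x | f x = y} : Finset α) := by ext; simp
  simp only [pr, ← measureReal_def]
  rw [hfiber, sum_measureReal_preimage_singleton _ fun x _ => hX (measurableSet_singleton x)]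

lemma sum_pr_mul_comp [IsFiniteMeasure μ] [Fintype α] [Fintype β]
    [MeasurableSpace α] [MeasurableSingletonClass α] {X : Ω → α} (hX : Measurable X)
    (f : α → β) (g : β → ℝ) :
    ∑ x, pr μ X x * g (f x) = ∑ y, pr μ (f ∘ X) y * g y := by
  classical
  simp only [pr_comp_eq_sum μ hX, Finset.sum_mul]
  rw [← Finset.sum_fiberwise _ f]
  refine Finset.sum_congr rfl fun y _ => Finset.sum_congr rfl fun x hx => ?_
  rw [(Finset.mem_filter.1 hx).2]

lemma pr_comp_congr [IsFiniteMeasure μ] [Fintype α]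
    [MeasurableSpace α] [MeasurableSingletonClass α] {X Y : Ω → α}
    (hX : Measurable X) (hY : Measurable Y) (h : ∀ x, pr μ X x = pr μ Y x)
    (f : α → β) (y : β) :
    pr μ (f ∘ X) y = pr μ (f ∘ Y) y := by
  classical
  simp only [pr_comp_eq_sum μ hX, pr_comp_eq_sum μ hY, h]

end Pr

section Entropy

variable {Ω α β : Type*} [MeasurableSpace Ω] (μ : Measure Ω) [Fintype α] [Fintype β]

lemma entropy_congr_pr {X Y : Ω → α} (h : ∀ x, pr μ X x = pr μ Y x) :
    entropy μ X = entropy μ Y := by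
  simp only [entropy, h]

lemma entropy_comp_equiv (X : Ω → α) (e : α ≃ β) : entropy μ (e ∘ X) = entropy μ X := by
  unfold entropy
  rw [← e.sum_comp]
  refine Finset.sum_congr rfl fun x _ => congrArg Real.negMulLog ?_
  rw [pr, pr, Set.preimage_comp, ← Set.image_singleton, e.preimage_image]

lemma entropy_comp_congr [IsFiniteMeasure μ] [MeasurableSpace α] [MeasurableSingletonClass α]
    {X Y : Ω → α} (hX : Measurable X) (hY : Measurable Y) (h : ∀ x, pr μ X x = pr μ Y x)
    (f : α → β) :
    entropy μ (f ∘ X) = entropy μ (f ∘ Y) :=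
  entropy_congr_pr μ (pr_comp_congr μ hX hY h f)

lemma entropy_comp_eq_neg_sum [IsFiniteMeasure μ] [MeasurableSpace α] [MeasurableSingletonClass α]
    {X : Ω → α} (hX : Measurable X) (f : α → β) :
    entropy μ (f ∘ X) = -∑ x, pr μ X x * Real.log (pr μ (f ∘ X) (f x)) := by
  rw [sum_pr_mul_comp μ hX f fun y => Real.log (pr μ (f ∘ X) y)]
  simp only [entropy, Real.negMulLog, neg_mul, Finset.sum_neg_distrib]

end Entropy

lemma mul_log_add_log_eq_of_mul_eq {p q a b : ℝ} (h : p * q = a * b) (hq : p ≠ 0 → q ≠ 0) :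
    p * (Real.log p + Real.log q) = p * (Real.log a + Real.log b) := by
  rcases eq_or_ne p 0 with rfl | hp
  · simp
  have hab : a * b ≠ 0 := h ▸ mul_ne_zero hp (hq hp)
  rw [← Real.log_mul hp (hq hp), ← Real.log_mul (left_ne_zero_of_mul hab)
    (right_ne_zero_of_mul hab), h]

theorem entropy_add_entropy_eq_of_markov {Ω α β γ : Type*} [MeasurableSpace Ω] (μ : Measure Ω)
    [IsFiniteMeasure μ] [Fintype α] [Fintype β] [Fintype γ]
    [MeasurableSpace α] [MeasurableSingletonClass α] [MeasurableSpace β]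
    [MeasurableSingletonClass β] [MeasurableSpace γ] [MeasurableSingletonClass γ]
    {X : Ω → α} {Y : Ω → β} {Z : Ω → γ}
    (hX : Measurable X) (hY : Measurable Y) (hZ : Measurable Z)
    (hMarkov : ∀ a b c,
      pr μ (fun ω => (X ω, Y ω, Z ω)) (a, b, c) * pr μ Y b
        = pr μ (fun ω => (X ω, Y ω)) (a, b) * pr μ (fun ω => (Y ω, Z ω)) (b, c)) :
    entropy μ (fun ω => (X ω, Y ω, Z ω)) + entropy μ Y
      = entropy μ (fun ω => (X ω, Y ω)) + entropy μ (fun ω => (Y ω, Z ω)) := by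
  set T := fun ω => (X ω, Y ω, Z ω)
  have hT : Measurable T := hX.prodMk (hY.prodMk hZ)
  have hHT : entropy μ T = -∑ t, pr μ T t * Real.log (pr μ T t) :=
    entropy_comp_eq_neg_sum μ hT id
  have hHY : entropy μ Y = -∑ t, pr μ T t * Real.log (pr μ Y t.2.1) :=
    entropy_comp_eq_neg_sum μ hT fun t => t.2.1
  have hHXY : entropy μ (fun ω => (X ω, Y ω))
      = -∑ t, pr μ T t * Real.log (pr μ (fun ω => (X ω, Y ω)) (t.1, t.2.1)) :=
    entropy_comp_eq_neg_sum μ hT fun t => (t.1, t.2.1)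
  have hHYZ : entropy μ (fun ω => (Y ω, Z ω))
      = -∑ t, pr μ T t * Real.log (pr μ (fun ω => (Y ω, Z ω)) t.2) :=
    entropy_comp_eq_neg_sum μ hT Prod.snd
  rw [hHT, hHY, hHXY, hHYZ]
  simp only [← neg_add, ← Finset.sum_add_distrib, ← mul_add]
  refine congrArg Neg.neg (Finset.sum_congr rfl fun ⟨a, b, c⟩ _ =>
    mul_log_add_log_eq_of_mul_eq (hMarkov a b c) fun hp => ?_)
  exact ((pr_nonneg μ T _).lt_of_ne' hp |>.trans_le (pr_le_pr_comp μ T (fun t => t.2.1) _)).ne'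

theorem rcc_average_rate_identity_general
    {Ω : Type*} [MeasurableSpace Ω] (μ : Measure Ω) [IsProbabilityMeasure μ]
    {α : Type*} [Fintype α]
    [MeasurableSpace α] [MeasurableSingletonClass α]
    (X₀ X₁ X₂ : Ω → α)
    (hX₀ : Measurable X₀) (hX₁ : Measurable X₁) (hX₂ : Measurable X₂)
    (hMarkov : ∀ a b c : α,
      pr μ (fun ω => (X₀ ω, X₁ ω, X₂ ω)) (a, b, c) * pr μ X₁ b
        = pr μ (fun ω => (X₀ ω, X₁ ω)) (a, b) * pr μ (fun ω => (X₁ ω, X₂ ω)) (b, c))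
    (hStat : ∀ a b : α,
      pr μ (fun ω => (X₀ ω, X₁ ω)) (a, b) = pr μ (fun ω => (X₁ ω, X₂ ω)) (a, b)) :
    entropy μ X₁ + condEntropy μ X₁ (fun ω => (X₀ ω, X₂ ω))
      = 2 * condEntropy μ X₁ X₀ + mutualInfo μ X₂ X₀ := by
  have hStat' : ∀ x : α × α,
      pr μ (fun ω => (X₀ ω, X₁ ω)) x = pr μ (fun ω => (X₁ ω, X₂ ω)) x :=
    fun x => hStat x.1 x.2
  have hX₀₁ := hX₀.prodMk hX₁
  have hX₁₂ := hX₁.prodMk hX₂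
  have hchain := entropy_add_entropy_eq_of_markov μ hX₀ hX₁ hX₂ hMarkov
  have hH₀ : entropy μ X₀ = entropy μ X₁ := entropy_comp_congr μ hX₀₁ hX₁₂ hStat' Prod.fst
  have hH₂ : entropy μ X₁ = entropy μ X₂ := entropy_comp_congr μ hX₀₁ hX₁₂ hStat' Prod.snd
  have hH₀₁ : entropy μ (fun ω => (X₀ ω, X₁ ω)) = entropy μ (fun ω => (X₁ ω, X₂ ω)) :=
    entropy_congr_pr μ hStat'
  have hswap₀₁ : entropy μ (fun ω => (X₁ ω, X₀ ω)) = entropy μ (fun ω => (X₀ ω, X₁ ω)) :=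
    entropy_comp_equiv μ (fun ω => (X₀ ω, X₁ ω)) (Equiv.prodComm α α)
  have hswap₀₂ : entropy μ (fun ω => (X₂ ω, X₀ ω)) = entropy μ (fun ω => (X₀ ω, X₂ ω)) :=
    entropy_comp_equiv μ (fun ω => (X₀ ω, X₂ ω)) (Equiv.prodComm α α)
  have hswap₀₁₂ :
      entropy μ (fun ω => (X₁ ω, X₀ ω, X₂ ω)) = entropy μ (fun ω => (X₀ ω, X₁ ω, X₂ ω)) :=
    entropy_comp_equiv μ (fun ω => (X₀ ω, X₁ ω, X₂ ω))
      ⟨fun t => (t.2.1, t.1, t.2.2), fun t => (t.2.1, t.1, t.2.2), fun _ => rfl, fun _ => rfl⟩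
  simp only [condEntropy, mutualInfo]
  linarith

/-- Entropy content of Proposition 4 of the paper: for a row-stationary Markov triple
`X₀, X₁, X₂` (values in the same finite type),
`H(X₁) + H(X₁ | X₀, X₂) = 2·H(X₁ | X₀) + I(X₂ ; X₀)`.
The Markov property `X₀ ⊥ X₂ | X₁` is stated in the product form
`P(X₀=a, X₁=b, X₂=c)·P(X₁=b) = P(X₀=a, X₁=b)·P(X₁=b, X₂=c)`, and row stationarity
as equality of the joint distributions of `(X₀, X₁)` and `(X₁, X₂)`. -/
theorem rcc_average_rate_identity
    {Ω : Type*} [MeasurableSpace Ω] (μ : Measure Ω) [IsProbabilityMeasure μ]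
    {α : Type*} [Fintype α] [Nonempty α]
    [MeasurableSpace α] [MeasurableSingletonClass α]
    (X₀ X₁ X₂ : Ω → α)
    (hX₀ : Measurable X₀) (hX₁ : Measurable X₁) (hX₂ : Measurable X₂)
    (hMarkov : ∀ a b c : α,
      pr μ (fun ω => (X₀ ω, X₁ ω, X₂ ω)) (a, b, c) * pr μ X₁ b
        = pr μ (fun ω => (X₀ ω, X₁ ω)) (a, b) * pr μ (fun ω => (X₁ ω, X₂ ω)) (b, c))
    (hStat : ∀ a b : α,
      pr μ (fun ω => (X₀ ω, X₁ ω)) (a, b) = pr μ (fun ω => (X₁ ω, X₂ ω)) (a, b)) :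
    entropy μ X₁ + condEntropy μ X₁ (fun ω => (X₀ ω, X₂ ω))
      = 2 * condEntropy μ X₁ X₀ + mutualInfo μ X₂ X₀ :=
  rcc_average_rate_identity_general μ X₀ X₁ X₂ hX₀ hX₁ hX₂ hMarkov hStat
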